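/- arXiv:2307.13456 — 4 statements merged into one kernel-verified Lean document; each statement's English description precedes it below -/
import Mathlib

section
/- Let H be a real Hilbert space, F : H → ℝ, and T > 0. Let u₁, u₂ : [0,T] → H be continuous functions for which there exist Bochner-integrable functions w₁, w₂ : [0,T] → H with uᵢ(t) = uᵢ(0) + ∫₀ᵗ wᵢ(s) ds for all t ∈ [0,T] (i = 1,2), and suppose that for almost every t ∈ (0,T) and for i = 1,2 one has the subgradient inequality F(φ) ≥ F(uᵢ(t)) + ⟨−wᵢ(t), φ − uᵢ(t)⟩ for all φ ∈ H. Then for all 0 ≤ s ≤ t ≤ T, ‖u₁(t) − u₂(t)‖ ≤ ‖u₁(s) − u₂(s)‖. In particular, if u₁(0) = u₂(0) then u₁ = u₂ on [0,T]. -/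
/-!
With `V = u₁ - u₂` and `w = w₁ - w₂`, monotonicity of the subdifferential gives `⟪w, V⟫ ≤ 0`
almost everywhere. To pass to `‖V‖` without differentiating a Bochner integral, use the exact
identity `‖v + ∫ₛᵗ w‖² = ‖v‖² + 2 ∫ₛᵗ ⟪w r, v + ∫ₛʳ w⟫ dr`. It comes from Fubini: the symmetric
kernel `⟪w x, w y⟫` integrates over the triangle `{y ≤ x}` to half its integral over the square,
since the diagonal is null.
-/

open MeasureTheory Set
open scoped RealInnerProductSpace

section

variable {H : Type*} [NormedAddCommGroup H] [InnerProductSpace ℝ H]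

section Kernel

variable {α : Type*} [MeasurableSpace α] {μ : Measure α} {w : α → H}

theorem integrable_inner_prod (hw : Integrable w μ) :
    Integrable (fun p : α × α => ⟪w p.1, w p.2⟫) (μ.prod μ) :=
  (hw.norm.mul_prod hw.norm).mono
    (hw.aestronglyMeasurable.comp_fst.inner hw.aestronglyMeasurable.comp_snd)
    (ae_of_all _ fun p => by
      simpa only [Real.norm_eq_abs, abs_mul, abs_norm] using abs_real_inner_le_norm _ _)

theorem inner_setIntegral_preimage_mk [CompleteSpace H] (hw : Integrable w μ) {S : Set (α × α)}
    (hS : MeasurableSet S) (x : α) :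
    ⟪w x, ∫ y in Prod.mk x ⁻¹' S, w y ∂μ⟫
      = ∫ y, S.indicator (fun p => ⟪w p.1, w p.2⟫) (x, y) ∂μ := by
  have hslice := measurable_prodMk_left (x := x) hS
  rw [← integral_indicator hslice, ← integral_inner (hw.indicator hslice)]
  congr 1 with y
  by_cases hy : (x, y) ∈ S
  · simp [Set.indicator_of_mem hy, Set.indicator_of_mem (show y ∈ Prod.mk x ⁻¹' S from hy)]
  · simp [Set.indicator_of_notMem hy,
      Set.indicator_of_notMem (show y ∉ Prod.mk x ⁻¹' S from hy)]

theorem integrable_inner_setIntegral_preimage_mk [CompleteSpace H] [SFinite μ]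
    (hw : Integrable w μ) {S : Set (α × α)}
    (hS : MeasurableSet S) :
    Integrable (fun x => ⟪w x, ∫ y in Prod.mk x ⁻¹' S, w y ∂μ⟫) μ := by
  simpa only [inner_setIntegral_preimage_mk hw hS] using
    ((integrable_inner_prod hw).indicator hS).integral_prod_left

theorem integral_inner_setIntegral_preimage_mk [CompleteSpace H] [SFinite μ]
    (hw : Integrable w μ) {S : Set (α × α)}
    (hS : MeasurableSet S) :
    ∫ x, ⟪w x, ∫ y in Prod.mk x ⁻¹' S, w y ∂μ⟫ ∂μ
      = ∫ p, S.indicator (fun p => ⟪w p.1, w p.2⟫) p ∂μ.prod μ := by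
  simp only [inner_setIntegral_preimage_mk hw hS]
  exact (integral_prod _ ((integrable_inner_prod hw).indicator hS)).symm

theorem integral_inner_prod [CompleteSpace H] [SFinite μ] (hw : Integrable w μ) :
    ∫ p, ⟪w p.1, w p.2⟫ ∂μ.prod μ = ‖∫ x, w x ∂μ‖ ^ 2 := by
  rw [integral_prod _ (integrable_inner_prod hw)]
  dsimp only
  simp only [integral_inner hw]
  simp only [real_inner_comm (∫ x, w x ∂μ)]
  rw [integral_inner hw, real_inner_self_eq_norm_sq]

end Kernel

section Order

variable {α : Type*} [LinearOrder α] [TopologicalSpace α] [OrderClosedTopology α]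
  [SecondCountableTopology α] [MeasurableSpace α] [OpensMeasurableSpace α]
  {μ : Measure α} {w : α → H}

theorem integral_inner_setIntegral_Iic [CompleteSpace H] [SFinite μ] [NullSingletonClass μ]
    (hw : Integrable w μ) :
    ∫ x, ⟪w x, ∫ y in Iic x, w y ∂μ⟫ ∂μ = 2⁻¹ * ‖∫ x, w x ∂μ‖ ^ 2 := by
  set k : α × α → ℝ := fun p => ⟪w p.1, w p.2⟫
  set L : Set (α × α) := {p | p.2 ≤ p.1}
  have hL : MeasurableSet L := measurableSet_le measurable_snd measurable_fst
  have hLc : Lᶜ = Prod.swap ⁻¹' {p | p.2 < p.1} := by ext p; simp [L]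
  have hL_eq : ∫ x, ⟪w x, ∫ y in Iic x, w y ∂μ⟫ ∂μ = ∫ p, L.indicator k p ∂μ.prod μ :=
    integral_inner_setIntegral_preimage_mk hw hL
  -- the diagonal is null, so `Iic x` may be replaced by `Iio x`, whose mirror image is `Lᶜ`
  have hLc_eq : ∫ x, ⟪w x, ∫ y in Iic x, w y ∂μ⟫ ∂μ = ∫ p, Lᶜ.indicator k p ∂μ.prod μ := by
    simp only [← setIntegral_congr_set (Iio_ae_eq_Iic (μ := μ))]
    refine (integral_inner_setIntegral_preimage_mk hw
      (measurableSet_lt measurable_snd measurable_fst)).trans ?_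
    rw [← integral_prod_swap]
    congr 1 with p
    rw [hLc, ← Set.indicator_comp_right]
    simp only [k, Function.comp_def, Prod.fst_swap, Prod.snd_swap, real_inner_comm]
  have hsum := congrArg (fun f => ∫ p, f p ∂μ.prod μ) (Set.indicator_self_add_compl L k)
  simp only [Pi.add_apply] at hsum
  rw [integral_add ((integrable_inner_prod hw).indicator hL)
    ((integrable_inner_prod hw).indicator hL.compl), ← hL_eq, ← hLc_eq,
    integral_inner_prod hw] at hsum
  linarith

theorem norm_add_integral_sq [CompleteSpace H] [SFinite μ] [NullSingletonClass μ]
    (hw : Integrable w μ) (v : H) :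
    ‖v + ∫ x, w x ∂μ‖ ^ 2 = ‖v‖ ^ 2 + 2 * ∫ x, ⟪w x, v + ∫ y in Iic x, w y ∂μ⟫ ∂μ := by
  have hIic : Integrable (fun x => ⟪w x, ∫ y in Iic x, w y ∂μ⟫) μ :=
    integrable_inner_setIntegral_preimage_mk hw (S := {p | p.2 ≤ p.1})
      (measurableSet_le measurable_snd measurable_fst)
  simp only [inner_add_right]
  rw [integral_add (hw.inner_const v) hIic, integral_inner_setIntegral_Iic hw,
    norm_add_sq_real]
  simp only [real_inner_comm v]
  rw [integral_inner hw]
  ring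

end Order

theorem IntervalIntegrable.mono_of_mem_Icc {E : Type*} [NormedAddCommGroup E] {μ : Measure ℝ}
    {w : ℝ → E} {a b s t : ℝ} (hw : IntervalIntegrable w μ a b) (hs : s ∈ Icc a b)
    (ht : t ∈ Icc a b) : IntervalIntegrable w μ s t :=
  hw.mono_set (uIcc_subset_uIcc (Icc_subset_uIcc hs) (Icc_subset_uIcc ht))

def IsPrimitiveOn (u w : ℝ → H) (a b : ℝ) : Prop :=
  ∀ r ∈ Icc a b, u r = u a + ∫ q in a..r, w q

namespace IsPrimitiveOn

variable {u u₁ u₂ w w₁ w₂ : ℝ → H} {a b : ℝ}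

theorem sub (h₁ : IsPrimitiveOn u₁ w₁ a b) (h₂ : IsPrimitiveOn u₂ w₂ a b)
    (hw₁ : IntervalIntegrable w₁ volume a b) (hw₂ : IntervalIntegrable w₂ volume a b) :
    IsPrimitiveOn (u₁ - u₂) (w₁ - w₂) a b := by
  intro r hr
  have ha : a ∈ Icc a b := ⟨le_rfl, hr.1.trans hr.2⟩
  simp only [Pi.sub_apply]
  rw [intervalIntegral.integral_sub (hw₁.mono_of_mem_Icc ha hr) (hw₂.mono_of_mem_Icc ha hr),
    h₁ r hr, h₂ r hr]
  abel

theorem mono (h : IsPrimitiveOn u w a b) (hw : IntervalIntegrable w volume a b) {s t : ℝ}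
    (hs : s ∈ Icc a b) (ht : t ∈ Icc a b) : IsPrimitiveOn u w s t := by
  intro r hr
  have ha : a ∈ Icc a b := ⟨le_rfl, hs.1.trans hs.2⟩
  have hrI : r ∈ Icc a b := ⟨hs.1.trans hr.1, hr.2.trans ht.2⟩
  rw [h r hrI, h s hs, ← intervalIntegral.integral_interval_sub_left
    (hw.mono_of_mem_Icc ha hrI) (hw.mono_of_mem_Icc ha hs)]
  abel

theorem norm_le_of_inner_nonpos [CompleteSpace H] {V : ℝ → H} {s t : ℝ}
    (hV : IsPrimitiveOn V w s t) (hst : s ≤ t) (hw : IntervalIntegrable w volume s t)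
    (hneg : ∀ᵐ r ∂volume.restrict (Ioo s t), ⟪w r, V r⟫ ≤ 0) :
    ‖V t‖ ≤ ‖V s‖ := by
  set μ := volume.restrict (Ioc s t)
  have hslice : ∀ r ∈ Ioc s t, ∫ q in s..r, w q = ∫ q in Iic r, w q ∂μ := by
    intro r hr
    rw [intervalIntegral.integral_of_le hr.1.le, Measure.restrict_restrict measurableSet_Iic,
      Iic_inter_Ioc_of_le hr.2]
  have hVt : V t = V s + ∫ q, w q ∂μ := by
    rw [hV t ⟨hst, le_rfl⟩, intervalIntegral.integral_of_le hst]
  have hdissipation : ∫ r, ⟪w r, V s + ∫ q in Iic r, w q ∂μ⟫ ∂μ ≤ 0 := by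
    rw [Measure.restrict_congr_set Ioo_ae_eq_Ioc] at hneg
    refine integral_nonpos_of_ae ?_
    filter_upwards [hneg, ae_restrict_mem measurableSet_Ioc] with r hr hmem
    rwa [← hslice r hmem, ← hV r (Ioc_subset_Icc_self hmem)]
  have hsq := norm_add_integral_sq (μ := μ) hw.1 (V s)
  rw [← hVt] at hsq
  exact (sq_le_sq₀ (norm_nonneg _) (norm_nonneg _)).mp (by linarith)

end IsPrimitiveOn

def IsSubgradient (F : H → ℝ) (u v : H) : Prop :=
  ∀ φ : H, F u + ⟪v, φ - u⟫ ≤ F φ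

theorem IsSubgradient.inner_sub_sub_nonneg {F : H → ℝ} {u₁ u₂ v₁ v₂ : H}
    (h₁ : IsSubgradient F u₁ v₁) (h₂ : IsSubgradient F u₂ v₂) :
    0 ≤ ⟪v₁ - v₂, u₁ - u₂⟫ := by
  have h₁₂ := h₁ u₂
  have h₂₁ := h₂ u₁
  rw [← neg_sub u₁ u₂, inner_neg_right] at h₁₂
  rw [inner_sub_left]
  linarith

end

theorem stmt_2_general {H : Type*} [NormedAddCommGroup H] [InnerProductSpace ℝ H] [CompleteSpace H]
    (F : H → ℝ) (T : ℝ)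
    (u₁ u₂ w₁ w₂ : ℝ → H)
    (hw₁int : IntervalIntegrable w₁ volume 0 T)
    (hw₂int : IntervalIntegrable w₂ volume 0 T)
    (hu₁ : ∀ t ∈ Set.Icc (0 : ℝ) T, u₁ t = u₁ 0 + ∫ s in (0 : ℝ)..t, w₁ s)
    (hu₂ : ∀ t ∈ Set.Icc (0 : ℝ) T, u₂ t = u₂ 0 + ∫ s in (0 : ℝ)..t, w₂ s)
    (hsub : ∀ᵐ t ∂(volume.restrict (Set.Ioo (0 : ℝ) T)),
      (∀ φ : H, F (u₁ t) + ⟪-(w₁ t), φ - u₁ t⟫ ≤ F φ) ∧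
      (∀ φ : H, F (u₂ t) + ⟪-(w₂ t), φ - u₂ t⟫ ≤ F φ)) :
    (∀ s t : ℝ, 0 ≤ s → s ≤ t → t ≤ T → ‖u₁ t - u₂ t‖ ≤ ‖u₁ s - u₂ s‖) ∧
    (u₁ 0 = u₂ 0 → ∀ t ∈ Set.Icc (0 : ℝ) T, u₁ t = u₂ t) := by
  have hw : IntervalIntegrable (w₁ - w₂) volume 0 T := hw₁int.sub hw₂int
  have hV : IsPrimitiveOn (u₁ - u₂) (w₁ - w₂) 0 T := IsPrimitiveOn.sub hu₁ hu₂ hw₁int hw₂int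
  have hmono : ∀ᵐ r ∂volume.restrict (Ioo 0 T), ⟪(w₁ - w₂) r, (u₁ - u₂) r⟫ ≤ 0 := by
    filter_upwards [hsub] with r ⟨h₁, h₂⟩
    have := IsSubgradient.inner_sub_sub_nonneg h₁ h₂
    rwa [neg_sub_neg, ← neg_sub, inner_neg_left, neg_nonneg] at this
  have hcontract : ∀ s t : ℝ, 0 ≤ s → s ≤ t → t ≤ T → ‖u₁ t - u₂ t‖ ≤ ‖u₁ s - u₂ s‖ := by
    intro s t hs hst htT
    have hsI : s ∈ Icc 0 T := ⟨hs, hst.trans htT⟩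
    have htI : t ∈ Icc 0 T := ⟨hs.trans hst, htT⟩
    exact (hV.mono hw hsI htI).norm_le_of_inner_nonpos hst (hw.mono_of_mem_Icc hsI htI)
      (ae_restrict_of_ae_restrict_of_subset (Ioo_subset_Ioo hs htT) hmono)
  refine ⟨hcontract, fun h₀ t ht => ?_⟩
  simpa [h₀, sub_eq_zero] using hcontract 0 t le_rfl ht.1 ht.2

/-- Contraction property for two solutions of the gradient flow `-u' ∈ ∂F(u)`
in a real Hilbert space: `t ↦ ‖u₁(t) - u₂(t)‖` is nonincreasing on `[0, T]`. -/
theorem stmt_2 {H : Type*} [NormedAddCommGroup H] [InnerProductSpace ℝ H] [CompleteSpace H]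
    (F : H → ℝ) (T : ℝ) (hT : 0 < T)
    (u₁ u₂ w₁ w₂ : ℝ → H)
    (hu₁cont : ContinuousOn u₁ (Set.Icc 0 T))
    (hu₂cont : ContinuousOn u₂ (Set.Icc 0 T))
    (hw₁int : IntervalIntegrable w₁ volume 0 T)
    (hw₂int : IntervalIntegrable w₂ volume 0 T)
    (hu₁ : ∀ t ∈ Set.Icc (0 : ℝ) T, u₁ t = u₁ 0 + ∫ s in (0 : ℝ)..t, w₁ s)
    (hu₂ : ∀ t ∈ Set.Icc (0 : ℝ) T, u₂ t = u₂ 0 + ∫ s in (0 : ℝ)..t, w₂ s)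
    (hsub : ∀ᵐ t ∂(volume.restrict (Set.Ioo (0 : ℝ) T)),
      (∀ φ : H, F (u₁ t) + ⟪-(w₁ t), φ - u₁ t⟫ ≤ F φ) ∧
      (∀ φ : H, F (u₂ t) + ⟪-(w₂ t), φ - u₂ t⟫ ≤ F φ)) :
    (∀ s t : ℝ, 0 ≤ s → s ≤ t → t ≤ T → ‖u₁ t - u₂ t‖ ≤ ‖u₁ s - u₂ s‖) ∧
    (u₁ 0 = u₂ 0 → ∀ t ∈ Set.Icc (0 : ℝ) T, u₁ t = u₂ t) :=
  stmt_2_general F T u₁ u₂ w₁ w₂ hw₁int hw₂int hu₁ hu₂ hsub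
end

section
/- Let H be a real Hilbert space, let F : H → ℝ be convex and continuous, T > 0, and u₀ ∈ H. Let u, v : [0,T] → H be continuous with u(0) = u₀, and suppose there exist Bochner-integrable functions w, z : [0,T] → H such that u(t) = u₀ + ∫₀ᵗ w(s) ds and v(t) = v(0) + ∫₀ᵗ z(s) ds for all t ∈ [0,T], and that for almost every t ∈ (0,T) one has F(φ) ≥ F(u(t)) + ⟨−w(t), φ − u(t)⟩ for all φ ∈ H. Then ∫₀ᵀ ⟨z(t), v(t) − u(t)⟩ dt + ∫₀ᵀ F(v(t)) dt − ∫₀ᵀ F(u(t)) dt ≥ ½‖v(T) − u(T)‖² − ½‖v(0) − u₀‖². -/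
/-!
With `f = v - u` and `h = z - w` we have `f t = f 0 + ∫₀ᵗ h`, and the energy identity
`∫₀ᵀ ⟪h, f⟫ = ½‖f T‖² - ½‖f 0‖²` holds without any differentiation: by Fubini, the integral of
`⟪h s, h t⟫` over the square is `‖∫ h‖²`, the diagonal is null, and the two triangles `s < t`,
`t < s` carry the same integral by symmetry of the inner product. The subgradient inequality at
`φ = v t` gives `-⟪w, v - u⟫ ≤ F ∘ v - F ∘ u` almost everywhere; integrating it and adding the
energy identity gives the claim.
-/

open MeasureTheory
open scoped RealInnerProductSpace

lemma ae_prod_fst_ne_snd {α : Type*} [MeasurableSpace α] [MeasurableEq α] {μ : Measure α}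
    [SFinite μ] [NullSingletonClass μ] : ∀ᵐ p ∂μ.prod μ, p.1 ≠ p.2 :=
  (Measure.ae_prod_iff_ae_ae measurableSet_diagonal.compl).2 <| ae_of_all _ fun x =>
    Filter.mem_of_superset (compl_mem_ae_iff.2 (measure_singleton x)) fun _ hy hxy => hy hxy.symm

section Iio

variable {α H : Type*} [LinearOrder α] [TopologicalSpace α] [OrderClosedTopology α]
  [SecondCountableTopology α] [MeasurableSpace α] [OpensMeasurableSpace α]
  [NormedAddCommGroup H] [InnerProductSpace ℝ H] {μ : Measure α} {h : α → H}

lemma MeasureTheory.Integrable.indicator_lt_inner (hh : Integrable h μ) :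
    Integrable ({p : α × α | p.2 < p.1}.indicator fun p => ⟪h p.1, h p.2⟫) (μ.prod μ) :=
  (hh.op_fst_snd (op := fun x y : H => ⟪x, y⟫) (by fun_prop)
    ⟨1, fun x y => by simpa using norm_inner_le_norm (𝕜 := ℝ) x y⟩ hh).indicator
    (measurableSet_lt measurable_snd measurable_fst)

variable [CompleteSpace H]

omit [SecondCountableTopology α] in
lemma integral_indicator_lt_inner (hh : Integrable h μ) (t : α) :
    ∫ s, {p : α × α | p.2 < p.1}.indicator (fun p => ⟪h p.1, h p.2⟫) (t, s) ∂μ =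
      ⟪h t, ∫ s in Set.Iio t, h s ∂μ⟫ := by
  rw [← integral_inner hh.integrableOn, ← integral_indicator measurableSet_Iio]
  rfl

variable [SFinite μ]

lemma MeasureTheory.Integrable.inner_setIntegral_Iio (hh : Integrable h μ) :
    Integrable (fun t => ⟪h t, ∫ s in Set.Iio t, h s ∂μ⟫) μ := by
  simpa only [integral_indicator_lt_inner hh] using hh.indicator_lt_inner.integral_prod_left

lemma integral_inner_setIntegral_Iio [NullSingletonClass μ] (hh : Integrable h μ) :
    ∫ t, ⟪h t, ∫ s in Set.Iio t, h s ∂μ⟫ ∂μ = 1 / 2 * ‖∫ t, h t ∂μ‖ ^ 2 := by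
  set G := {p : α × α | p.2 < p.1}.indicator fun p => ⟪h p.1, h p.2⟫
  have hG_int : Integrable G (μ.prod μ) := hh.indicator_lt_inner
  have hG : ∫ p, G p ∂μ.prod μ = ∫ t, ⟪h t, ∫ s in Set.Iio t, h s ∂μ⟫ ∂μ := by
    simp only [integral_prod G hG_int, G, integral_indicator_lt_inner hh]
  have h_split : (fun p : α × α => ⟪h p.1, h p.2⟫) =ᵐ[μ.prod μ] fun p => G p + G p.swap := by
    filter_upwards [ae_prod_fst_ne_snd] with p hp
    rcases hp.lt_or_gt with hlt | hlt
    · simp [G, hlt, hlt.not_gt, real_inner_comm]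
    · simp [G, hlt, hlt.not_gt]
  have hsq : ∫ p, ⟪h p.1, h p.2⟫ ∂μ.prod μ = ‖∫ t, h t ∂μ‖ ^ 2 := by
    rw [← real_inner_self_eq_norm_sq]
    exact integral_prod_bilin (innerSL ℝ) hh hh
  have hG_swap_int : Integrable (fun p => G p.swap) (μ.prod μ) := hG_int.swap
  rw [integral_congr_ae h_split, integral_add hG_int hG_swap_int, integral_prod_swap, hG] at hsq
  linarith

end Iio

section Interval

variable {H : Type*} [NormedAddCommGroup H] [InnerProductSpace ℝ H]

lemma IntervalIntegrable.inner_continuousOn {μ : Measure ℝ} {a b : ℝ} {g f : ℝ → H}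
    (hg : IntervalIntegrable g μ a b) (hf : ContinuousOn f (Set.uIcc a b)) :
    IntervalIntegrable (fun t => ⟪g t, f t⟫) μ a b := by
  rw [intervalIntegrable_iff] at hg ⊢
  obtain ⟨M, hM⟩ := isCompact_uIcc.exists_bound_of_continuousOn hf
  refine (hg.norm.mul_const M).mono'
    (hg.aestronglyMeasurable.inner ((hf.mono Set.uIoc_subset_uIcc).aestronglyMeasurable
      measurableSet_uIoc)) ?_
  filter_upwards [ae_restrict_mem measurableSet_uIoc] with t ht
  exact (norm_inner_le_norm _ _).trans (by gcongr; exact hM t (Set.uIoc_subset_uIcc ht))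

theorem neg_integral_inner_le_of_ae_subgradient {F : H → ℝ} (hF : Continuous F) {a b : ℝ}
    (hab : a ≤ b) {u v w : ℝ → H} (hu : ContinuousOn u (Set.Icc a b))
    (hv : ContinuousOn v (Set.Icc a b)) (hw : IntervalIntegrable w volume a b)
    (hsub : ∀ᵐ t ∂(volume.restrict (Set.Ioo a b)), ∀ φ : H, F (u t) + ⟪-(w t), φ - u t⟫ ≤ F φ) :
    -∫ t in a..b, ⟪w t, v t - u t⟫ ≤ (∫ t in a..b, F (v t)) - ∫ t in a..b, F (u t) := by
  rw [← Set.uIcc_of_le hab] at hu hv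
  have hFv : IntervalIntegrable (fun t => F (v t)) volume a b :=
    (hF.comp_continuousOn hv).intervalIntegrable
  have hFu : IntervalIntegrable (fun t => F (u t)) volume a b :=
    (hF.comp_continuousOn hu).intervalIntegrable
  have h_ae : (fun t => -⟪w t, v t - u t⟫) ≤ᵐ[volume.restrict (Set.Icc a b)]
      fun t => F (v t) - F (u t) := by
    rw [← Measure.restrict_congr_set Ioo_ae_eq_Icc]
    filter_upwards [hsub] with t ht
    linarith [inner_neg_left (𝕜 := ℝ) (w t) (v t - u t) ▸ ht (v t)]
  rw [← intervalIntegral.integral_neg, ← intervalIntegral.integral_sub hFv hFu]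
  exact intervalIntegral.integral_mono_ae_restrict hab
    (hw.inner_continuousOn (hv.sub hu)).neg (hFv.sub hFu) h_ae

variable [CompleteSpace H]

theorem integral_inner_eq_of_forall_eq_add_integral {a b : ℝ} (hab : a ≤ b) {h f : ℝ → H}
    (hh : IntervalIntegrable h volume a b)
    (hf : ∀ t ∈ Set.Icc a b, f t = f a + ∫ s in a..t, h s) :
    ∫ t in a..b, ⟪h t, f t⟫ = 1 / 2 * ‖f b‖ ^ 2 - 1 / 2 * ‖f a‖ ^ 2 := by
  set μ := volume.restrict (Set.Ioc a b)
  have hμ : Integrable h μ := hh.1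
  have h_prim : ∀ t ∈ Set.Ioc a b, ∫ s in Set.Iio t, h s ∂μ = f t - f a := by
    intro t ht
    have h_inter : Set.Iio t ∩ Set.Ioc a b = Set.Ioo a t := by
      ext s
      simp only [Set.mem_inter_iff, Set.mem_Iio, Set.mem_Ioc, Set.mem_Ioo]
      exact ⟨fun hs => ⟨hs.2.1, hs.1⟩, fun hs => ⟨hs.2, hs.1, hs.2.le.trans ht.2⟩⟩
    rw [Measure.restrict_restrict measurableSet_Iio, h_inter,
      ← integral_Ioc_eq_integral_Ioo, ← intervalIntegral.integral_of_le ht.1.le,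
      hf t (Set.Ioc_subset_Icc_self ht), add_sub_cancel_left]
  have h_total : ∫ s, h s ∂μ = f b - f a := by
    rw [← intervalIntegral.integral_of_le hab, hf b ⟨hab, le_rfl⟩, add_sub_cancel_left]
  calc ∫ t in a..b, ⟪h t, f t⟫
      = ∫ t, ⟪f a, h t⟫ + ⟪h t, ∫ s in Set.Iio t, h s ∂μ⟫ ∂μ := by
        rw [intervalIntegral.integral_of_le hab]
        refine setIntegral_congr_fun measurableSet_Ioc fun t ht => ?_
        rw [h_prim t ht, real_inner_comm (f t - f a), ← inner_add_left, add_sub_cancel,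
          real_inner_comm]
    _ = ⟪f a, f b - f a⟫ + 1 / 2 * ‖f b - f a‖ ^ 2 := by
      rw [integral_add (hμ.const_inner _) hμ.inner_setIntegral_Iio, integral_inner hμ,
        integral_inner_setIntegral_Iio hμ, h_total]
    _ = 1 / 2 * ‖f b‖ ^ 2 - 1 / 2 * ‖f a‖ ^ 2 := by
      rw [norm_sub_sq_real, inner_sub_right, real_inner_self_eq_norm_sq, real_inner_comm]
      ring

end Interval

theorem stmt_3_general {H : Type*} [NormedAddCommGroup H] [InnerProductSpace ℝ H] [CompleteSpace H]
    (F : H → ℝ) (hFcont : Continuous F)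
    (T : ℝ) (hT : 0 < T) (u₀ : H)
    (u v w z : ℝ → H)
    (hucont : ContinuousOn u (Set.Icc 0 T))
    (hvcont : ContinuousOn v (Set.Icc 0 T))
    (hu0 : u 0 = u₀)
    (hwint : IntervalIntegrable w volume 0 T)
    (hzint : IntervalIntegrable z volume 0 T)
    (hu : ∀ t ∈ Set.Icc (0 : ℝ) T, u t = u₀ + ∫ s in (0 : ℝ)..t, w s)
    (hv : ∀ t ∈ Set.Icc (0 : ℝ) T, v t = v 0 + ∫ s in (0 : ℝ)..t, z s)
    (hsub : ∀ᵐ t ∂(volume.restrict (Set.Ioo (0 : ℝ) T)),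
      ∀ φ : H, F (u t) + ⟪-(w t), φ - u t⟫ ≤ F φ) :
    (1 : ℝ) / 2 * ‖v T - u T‖ ^ 2 - 1 / 2 * ‖v 0 - u₀‖ ^ 2 ≤
      (∫ t in (0 : ℝ)..T, ⟪z t, v t - u t⟫) + (∫ t in (0 : ℝ)..T, F (v t))
        - ∫ t in (0 : ℝ)..T, F (u t) := by
  have hf : ∀ t ∈ Set.Icc 0 T, v t - u t = (v 0 - u 0) + ∫ s in (0 : ℝ)..t, (z s - w s) := by
    intro t ht
    have h0t : Set.uIcc 0 t ⊆ Set.uIcc 0 T :=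
      Set.uIcc_subset_uIcc_left (Set.mem_uIcc_of_le ht.1 ht.2)
    rw [intervalIntegral.integral_sub (hzint.mono_set h0t) (hwint.mono_set h0t), hu t ht, hv t ht,
      hu0]
    abel
  have h_diff := integral_inner_eq_of_forall_eq_add_integral hT.le (hzint.sub hwint) hf
  have hvu : ContinuousOn (fun t => v t - u t) (Set.uIcc 0 T) :=
    Set.uIcc_of_le hT.le ▸ hvcont.sub hucont
  rw [hu0, intervalIntegral.integral_congr (g := fun t => ⟪z t, v t - u t⟫ - ⟪w t, v t - u t⟫)
    (fun t _ => inner_sub_left _ _ _), intervalIntegral.integral_sub (hzint.inner_continuousOn hvu)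
    (hwint.inner_continuousOn hvu)] at h_diff
  linarith [neg_integral_inner_le_of_ae_subgradient hFcont hT.le hucont hvcont hwint hsub]

/-- Every weak solution of the gradient flow `-u' ∈ ∂F(u)` of a convex continuous
functional `F` on a real Hilbert space is a variational solution in the sense of
Lichnewsky–Temam. -/
theorem stmt_3 {H : Type*} [NormedAddCommGroup H] [InnerProductSpace ℝ H] [CompleteSpace H]
    (F : H → ℝ) (hFconv : ConvexOn ℝ Set.univ F) (hFcont : Continuous F)
    (T : ℝ) (hT : 0 < T) (u₀ : H)
    (u v w z : ℝ → H)
    (hucont : ContinuousOn u (Set.Icc 0 T))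
    (hvcont : ContinuousOn v (Set.Icc 0 T))
    (hu0 : u 0 = u₀)
    (hwint : IntervalIntegrable w volume 0 T)
    (hzint : IntervalIntegrable z volume 0 T)
    (hu : ∀ t ∈ Set.Icc (0 : ℝ) T, u t = u₀ + ∫ s in (0 : ℝ)..t, w s)
    (hv : ∀ t ∈ Set.Icc (0 : ℝ) T, v t = v 0 + ∫ s in (0 : ℝ)..t, z s)
    (hsub : ∀ᵐ t ∂(volume.restrict (Set.Ioo (0 : ℝ) T)),
      ∀ φ : H, F (u t) + ⟪-(w t), φ - u t⟫ ≤ F φ) :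
    (1 : ℝ) / 2 * ‖v T - u T‖ ^ 2 - 1 / 2 * ‖v 0 - u₀‖ ^ 2 ≤
      (∫ t in (0 : ℝ)..T, ⟪z t, v t - u t⟫) + (∫ t in (0 : ℝ)..T, F (v t))
        - ∫ t in (0 : ℝ)..T, F (u t) :=
  stmt_3_general F hFcont T hT u₀ u v w z hucont hvcont hu0 hwint hzint hu hv hsub
end

section
/- Let (X, ν) be a measure space, 1 < q < p < ∞, and let p′ = p/(p−1), q′ = q/(q−1) be the conjugate exponents. Let f : X → ℝ be measurable with ∫|f|ᵖ dν < ∞ and ∫|f|^q dν < ∞, and let X₁, X₂ : X → ℝ be measurable with ∫|X₁|^{p′} dν < ∞ and ∫|X₂|^{q′} dν < ∞. Then (1/p)∫|f|ᵖ dν + (1/q)∫|f|^q dν + (1/p′)∫|X₁|^{p′} dν + (1/q′)∫|X₂|^{q′} dν = ∫ f·(X₁ + X₂) dν if and only if ν-almost everywhere f·X₁ = |f|ᵖ = |X₁|^{p′} and f·X₂ = |f|^q = |X₂|^{q′}. -/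
open MeasureTheory

/-! The left side minus the right side is `∫ (gap₁ + gap₂)`, where `gapᵢ` are the pointwise
Young gaps `|a|ᵖ/p + |b|^{p'}/p' - a b ≥ 0`. Hence equality holds iff both gaps vanish a.e.,
and the equality case of Young's inequality says when a single gap vanishes. -/

theorem Real.young_inequality_eq_iff {p q : ℝ} (hpq : p.HolderConjugate q) (a b : ℝ) :
    a * b = |a| ^ p / p + |b| ^ q / q ↔ a * b = |a| ^ p ∧ |a| ^ p = |b| ^ q := by
  have split : ∀ t : ℝ, t / p + t / q = t := fun t => by
    rw [div_eq_mul_inv, div_eq_mul_inv, ← mul_add, hpq.inv_add_inv_eq_one, mul_one]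
  constructor
  · intro h
    -- Equality forces `a * b = |a| * |b|`, which reduces to the equality case for `|a|, |b|`.
    have habs : a * b = |a| * |b| := le_antisymm ((le_abs_self _).trans (abs_mul a b).le)
      (h ▸ young_inequality_of_nonneg (abs_nonneg a) (abs_nonneg b) hpq)
    have hpow : |a| ^ p = |b| ^ q :=
      (young_inequality_eq_iff_of_nonneg (abs_nonneg a) (abs_nonneg b) hpq).1 (habs ▸ h)
    exact ⟨by rw [h, ← hpow, split], hpow⟩
  · rintro ⟨hab, hpow⟩
    rw [← hpow, split, hab]

noncomputable def youngGap (p q a b : ℝ) : ℝ := |a| ^ p / p + |b| ^ q / q - a * b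

section YoungGap

variable {p q : ℝ}

theorem youngGap_nonneg (hpq : p.HolderConjugate q) (a b : ℝ) : 0 ≤ youngGap p q a b :=
  sub_nonneg.2 (Real.young_inequality a b hpq)

theorem youngGap_eq_zero_iff (hpq : p.HolderConjugate q) (a b : ℝ) :
    youngGap p q a b = 0 ↔ a * b = |a| ^ p ∧ |a| ^ p = |b| ^ q :=
  sub_eq_zero.trans (eq_comm.trans (Real.young_inequality_eq_iff hpq a b))

variable {X : Type*} [MeasurableSpace X] {ν : Measure X} {f g : X → ℝ}
  (hpq : p.HolderConjugate q) (hf : AEStronglyMeasurable f ν) (hg : AEStronglyMeasurable g ν)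
  (hfp : Integrable (fun x => |f x| ^ p) ν) (hgq : Integrable (fun x => |g x| ^ q) ν)
include hpq hf hg hfp hgq

theorem integrable_mul_of_young : Integrable (fun x => f x * g x) ν := by
  refine ((hfp.div_const p).add (hgq.div_const q)).mono' (hf.mul hg) (ae_of_all _ fun x => ?_)
  rw [Real.norm_eq_abs, abs_mul]
  exact Real.young_inequality_of_nonneg (abs_nonneg _) (abs_nonneg _) hpq

theorem integrable_youngGap : Integrable (fun x => youngGap p q (f x) (g x)) ν :=
  ((hfp.div_const p).add (hgq.div_const q)).sub (integrable_mul_of_young hpq hf hg hfp hgq)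

theorem integral_youngGap :
    ∫ x, youngGap p q (f x) (g x) ∂ν
      = (∫ x, |f x| ^ p ∂ν) / p + (∫ x, |g x| ^ q ∂ν) / q - ∫ x, f x * g x ∂ν := by
  have hsum : Integrable (fun x => |f x| ^ p / p + |g x| ^ q / q) ν :=
    (hfp.div_const p).add (hgq.div_const q)
  rw [← integral_div, ← integral_div, ← integral_add (hfp.div_const p) (hgq.div_const q),
    ← integral_sub hsum (integrable_mul_of_young hpq hf hg hfp hgq)]
  rfl

theorem integral_youngGap_eq_zero_iff :
    ∫ x, youngGap p q (f x) (g x) ∂ν = 0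
      ↔ ∀ᵐ x ∂ν, f x * g x = |f x| ^ p ∧ |f x| ^ p = |g x| ^ q := by
  rw [integral_eq_zero_iff_of_nonneg (fun x => youngGap_nonneg hpq (f x) (g x))
    (integrable_youngGap hpq hf hg hfp hgq)]
  exact Filter.eventually_congr (ae_of_all _ fun x => youngGap_eq_zero_iff hpq (f x) (g x))

end YoungGap

/-- Scalar content of the characterisation of the subdifferential of
`E_{(q,p)}(v) = ∫((1/p)|v|^p + (1/q)|v|^q)`: the Fenchel equality holds iff the two
Young inequalities are pointwise equalities a.e. -/
theorem stmt_13 {X : Type*} [MeasurableSpace X] (ν : Measure X)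
    (p q p' q' : ℝ) (hq : 1 < q) (hqp : q < p)
    (hp' : p' = p / (p - 1)) (hq' : q' = q / (q - 1))
    (f X₁ X₂ : X → ℝ) (hf : Measurable f) (hX₁ : Measurable X₁) (hX₂ : Measurable X₂)
    (hfp : Integrable (fun x => |f x| ^ p) ν)
    (hfq : Integrable (fun x => |f x| ^ q) ν)
    (hX₁p : Integrable (fun x => |X₁ x| ^ p') ν)
    (hX₂q : Integrable (fun x => |X₂ x| ^ q') ν) :
    ((1 / p) * (∫ x, |f x| ^ p ∂ν) + (1 / q) * (∫ x, |f x| ^ q ∂ν)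
        + (1 / p') * (∫ x, |X₁ x| ^ p' ∂ν) + (1 / q') * (∫ x, |X₂ x| ^ q' ∂ν)
        = ∫ x, f x * (X₁ x + X₂ x) ∂ν)
      ↔ ∀ᵐ x ∂ν, (f x * X₁ x = |f x| ^ p ∧ |f x| ^ p = |X₁ x| ^ p') ∧
          (f x * X₂ x = |f x| ^ q ∧ |f x| ^ q = |X₂ x| ^ q') := by
  have hpc : p.HolderConjugate p' :=
    (Real.holderConjugate_iff_eq_conjExponent (hq.trans hqp)).2 hp'
  have hqc : q.HolderConjugate q' := (Real.holderConjugate_iff_eq_conjExponent hq).2 hq'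
  have hf' : AEStronglyMeasurable f ν := hf.aestronglyMeasurable
  have hX₁' : AEStronglyMeasurable X₁ ν := hX₁.aestronglyMeasurable
  have hX₂' : AEStronglyMeasurable X₂ ν := hX₂.aestronglyMeasurable
  have hsplit : ∫ x, f x * (X₁ x + X₂ x) ∂ν = (∫ x, f x * X₁ x ∂ν) + ∫ x, f x * X₂ x ∂ν := by
    simp_rw [mul_add]
    exact integral_add (integrable_mul_of_young hpc hf' hX₁' hfp hX₁p)
      (integrable_mul_of_young hqc hf' hX₂' hfq hX₂q)
  calc _ ↔ (∫ x, youngGap p p' (f x) (X₁ x) ∂ν) + ∫ x, youngGap q q' (f x) (X₂ x) ∂ν = 0 := by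
        simp only [one_div_mul_eq_div]
        rw [hsplit, integral_youngGap hpc hf' hX₁' hfp hX₁p,
          integral_youngGap hqc hf' hX₂' hfq hX₂q]
        constructor <;> intro h <;> linarith
    _ ↔ (∫ x, youngGap p p' (f x) (X₁ x) ∂ν) = 0 ∧ ∫ x, youngGap q q' (f x) (X₂ x) ∂ν = 0 :=
        add_eq_zero_iff_of_nonneg (integral_nonneg fun x => youngGap_nonneg hpc _ _)
          (integral_nonneg fun x => youngGap_nonneg hqc _ _)
    _ ↔ _ := by
        rw [integral_youngGap_eq_zero_iff hpc hf' hX₁' hfp hX₁p,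
          integral_youngGap_eq_zero_iff hqc hf' hX₂' hfq hX₂q]
        exact Filter.eventually_and.symm
end

section
/- Let (X, ν) be a measure space, p ∈ (1, ∞), and p′ = p/(p−1) its conjugate exponent. Let f : X → ℝ be measurable with ∫|f|ᵖ dν < ∞ and ∫|f| dν < ∞, let X₁ : X → ℝ be measurable with ∫|X₁|^{p′} dν < ∞, and let X₂ : X → ℝ be measurable with |X₂| ≤ 1 ν-almost everywhere. Then (1/p)∫|f|ᵖ dν + (1/p′)∫|X₁|^{p′} dν + ∫|f| dν = ∫ f·(X₁ + X₂) dν if and only if ν-almost everywhere f·X₁ = |f|ᵖ = |X₁|^{p′} and f·X₂ = |f|. -/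
open MeasureTheory


lemma sum_div_conj {p q : ℝ} (hpq : p.HolderConjugate q) (t : ℝ) :
    t / p + t / q = t := by
  rw [div_eq_mul_inv, div_eq_mul_inv, ← mul_add, hpq.inv_add_inv_eq_one, mul_one]

/-- Equality case of Young's inequality. -/
lemma young_eq_aux {p q a b : ℝ} (hpq : p.HolderConjugate q) (ha : 0 ≤ a) (hb : 0 ≤ b)
    (h : a * b = a ^ p / p + b ^ q / q) : a ^ p = b ^ q := by
  rcases eq_or_lt_of_le ha with ha0 | ha0
  · rw [← ha0] at h ⊢
    rw [Real.zero_rpow hpq.ne_zero] at h ⊢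
    rw [zero_mul, zero_div] at h
    have : b ^ q / q = 0 := by linarith
    have hb0 : b ^ q = 0 := by
      rwa [div_eq_zero_iff, or_iff_left hpq.symm.ne_zero] at this
    linarith
  rcases eq_or_lt_of_le hb with hb0 | hb0
  · rw [← hb0] at h ⊢
    rw [Real.zero_rpow hpq.symm.ne_zero] at h ⊢
    rw [mul_zero, zero_div] at h
    have : a ^ p / p = 0 := by linarith
    have ha0' : a ^ p = 0 := by
      rwa [div_eq_zero_iff, or_iff_left hpq.ne_zero] at this
    linarith
  by_contra hne
  have hap : 0 < a ^ p := Real.rpow_pos_of_pos ha0 p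
  have hbq : 0 < b ^ q := Real.rpow_pos_of_pos hb0 q
  have hlogne : Real.log (a ^ p) ≠ Real.log (b ^ q) := by
    intro hl
    exact hne (Real.log_injOn_pos (Set.mem_Ioi.2 hap) (Set.mem_Ioi.2 hbq) hl)
  have hkey := strictConvexOn_exp.2 (Set.mem_univ (Real.log (a ^ p)))
    (Set.mem_univ (Real.log (b ^ q))) hlogne (inv_pos.2 hpq.pos) (inv_pos.2 hpq.symm.pos)
    hpq.inv_add_inv_eq_one
  rw [smul_eq_mul, smul_eq_mul, smul_eq_mul, smul_eq_mul, Real.exp_log hap, Real.exp_log hbq,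
    Real.log_rpow ha0, Real.log_rpow hb0] at hkey
  have h1 : p⁻¹ * (p * Real.log a) + q⁻¹ * (q * Real.log b) = Real.log a + Real.log b := by
    have hp0 := hpq.ne_zero
    have hq0 := hpq.symm.ne_zero
    field_simp
  rw [h1, Real.exp_add, Real.exp_log ha0, Real.exp_log hb0] at hkey
  have e1 : a ^ p / p = p⁻¹ * a ^ p := by rw [div_eq_inv_mul]
  have e2 : b ^ q / q = q⁻¹ * b ^ q := by rw [div_eq_inv_mul]
  linarith

lemma pointwise_key {p q : ℝ} (hpq : p.HolderConjugate q) (a b c : ℝ) (hc : |c| ≤ 1) :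
    (|a| ^ p / p + |b| ^ q / q - a * b) + (|a| - a * c) = 0
      ↔ ((a * b = |a| ^ p ∧ |a| ^ p = |b| ^ q) ∧ a * c = |a|) := by
  have ht1 : 0 ≤ |a| ^ p / p + |b| ^ q / q - a * b :=
    sub_nonneg.2 (Real.young_inequality a b hpq)
  have ht2 : 0 ≤ |a| - a * c := by
    have h1 : a * c ≤ |a * c| := le_abs_self _
    have h2 : |a * c| ≤ |a| := by
      rw [abs_mul]
      calc |a| * |c| ≤ |a| * 1 := mul_le_mul_of_nonneg_left hc (abs_nonneg a)
        _ = |a| := mul_one _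
    linarith
  constructor
  · intro h
    have hz1 : |a| ^ p / p + |b| ^ q / q - a * b = 0 := by linarith
    have hz2 : |a| - a * c = 0 := by linarith
    have hab : a * b = |a| ^ p / p + |b| ^ q / q := by linarith
    have hya : |a| * |b| ≤ |a| ^ p / p + |b| ^ q / q := by
      simpa [abs_abs] using Real.young_inequality |a| |b| hpq
    have habs : a * b = |a| * |b| := by
      have : a * b ≤ |a| * |b| := (le_abs_self _).trans (abs_mul a b).le
      linarith
    have heq : |a| ^ p = |b| ^ q :=
      young_eq_aux hpq (abs_nonneg a) (abs_nonneg b) (by rw [← habs]; exact hab)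
    refine ⟨⟨?_, heq⟩, by linarith⟩
    rw [hab, ← heq, sum_div_conj hpq]
  · rintro ⟨⟨h1, h2⟩, h3⟩
    rw [← h2, sum_div_conj hpq, h1, h3]; ring

/-- Scalar content of the characterisation of the subdifferential of
`E_{(1,p)}(v) = ∫((1/p)|v|^p + |v|)`: the Fenchel equality holds iff
`f·X₁ = |f|^p = |X₁|^{p'}` and `f·X₂ = |f|` a.e. -/
theorem stmt_14 {X : Type*} [MeasurableSpace X] (ν : Measure X)
    (p p' : ℝ) (hp : 1 < p) (hp' : p' = p / (p - 1))
    (f X₁ X₂ : X → ℝ) (hf : Measurable f) (hX₁ : Measurable X₁) (hX₂ : Measurable X₂)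
    (hfp : Integrable (fun x => |f x| ^ p) ν)
    (hf1 : Integrable (fun x => |f x|) ν)
    (hX₁p : Integrable (fun x => |X₁ x| ^ p') ν)
    (hX₂1 : ∀ᵐ x ∂ν, |X₂ x| ≤ 1) :
    ((1 / p) * (∫ x, |f x| ^ p ∂ν) + (1 / p') * (∫ x, |X₁ x| ^ p' ∂ν)
        + (∫ x, |f x| ∂ν) = ∫ x, f x * (X₁ x + X₂ x) ∂ν)
      ↔ ∀ᵐ x ∂ν, (f x * X₁ x = |f x| ^ p ∧ |f x| ^ p = |X₁ x| ^ p')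
          ∧ f x * X₂ x = |f x| := by
  subst hp'
  have hpq : p.HolderConjugate (p / (p - 1)) := Real.HolderConjugate.conjExponent hp
  set q := p / (p - 1) with hq
  -- integrability of the products
  have hfX₁ : Integrable (fun x => f x * X₁ x) ν := by
    refine Integrable.mono' ((hfp.div_const p).add (hX₁p.div_const q))
      (hf.mul hX₁).aestronglyMeasurable (Filter.Eventually.of_forall fun x => ?_)
    rw [Real.norm_eq_abs, abs_mul]
    simpa [abs_abs] using Real.young_inequality |f x| |X₁ x| hpq
  have hfX₂ : Integrable (fun x => f x * X₂ x) ν := by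
    refine Integrable.mono' hf1 (hf.mul hX₂).aestronglyMeasurable ?_
    filter_upwards [hX₂1] with x hx
    rw [Real.norm_eq_abs, abs_mul]
    calc |f x| * |X₂ x| ≤ |f x| * 1 := mul_le_mul_of_nonneg_left hx (abs_nonneg _)
      _ = |f x| := mul_one _
  have hI0 : Integrable (fun x => |f x| ^ p / p + |X₁ x| ^ q / q) ν :=
    (hfp.div_const p).add (hX₁p.div_const q)
  have hI1 : Integrable (fun x => |f x| ^ p / p + |X₁ x| ^ q / q - f x * X₁ x) ν :=
    ((hfp.div_const p).add (hX₁p.div_const q)).sub hfX₁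
  have hI2 : Integrable (fun x => |f x| - f x * X₂ x) ν := hf1.sub hfX₂
  have hg : Integrable (fun x =>
      (|f x| ^ p / p + |X₁ x| ^ q / q - f x * X₁ x) + (|f x| - f x * X₂ x)) ν := hI1.add hI2
  have hg_nonneg : 0 ≤ᵐ[ν] fun x =>
      (|f x| ^ p / p + |X₁ x| ^ q / q - f x * X₁ x) + (|f x| - f x * X₂ x) := by
    filter_upwards [hX₂1] with x hx
    have h1 : 0 ≤ |f x| ^ p / p + |X₁ x| ^ q / q - f x * X₁ x :=
      sub_nonneg.2 (Real.young_inequality _ _ hpq)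
    have h2 : 0 ≤ |f x| - f x * X₂ x := by
      have ha : f x * X₂ x ≤ |f x * X₂ x| := le_abs_self _
      have hb : |f x * X₂ x| ≤ |f x| := by
        rw [abs_mul]
        calc |f x| * |X₂ x| ≤ |f x| * 1 := mul_le_mul_of_nonneg_left hx (abs_nonneg _)
          _ = |f x| := mul_one _
      linarith
    positivity
  -- compute the integral of g
  have hint : ∫ x, ((|f x| ^ p / p + |X₁ x| ^ q / q - f x * X₁ x) + (|f x| - f x * X₂ x)) ∂ν
      = ((1 / p) * (∫ x, |f x| ^ p ∂ν) + (1 / q) * (∫ x, |X₁ x| ^ q ∂ν)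
        + (∫ x, |f x| ∂ν)) - ∫ x, f x * (X₁ x + X₂ x) ∂ν := by
    have hsplit : ∫ x, f x * (X₁ x + X₂ x) ∂ν
        = (∫ x, f x * X₁ x ∂ν) + ∫ x, f x * X₂ x ∂ν := by
      simp_rw [mul_add]
      exact integral_add hfX₁ hfX₂
    rw [integral_add hI1 hI2, integral_sub hI0 hfX₁,
      integral_add (hfp.div_const p) (hX₁p.div_const q), integral_sub hf1 hfX₂,
      integral_div, integral_div, hsplit]
    ring
  constructor
  · intro h
    have hz : ∫ x, ((|f x| ^ p / p + |X₁ x| ^ q / q - f x * X₁ x) + (|f x| - f x * X₂ x)) ∂ν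
        = 0 := by rw [hint, h, sub_self]
    have hae := (integral_eq_zero_iff_of_nonneg_ae hg_nonneg hg).1 hz
    filter_upwards [hae, hX₂1] with x hx hx2
    exact (pointwise_key hpq (f x) (X₁ x) (X₂ x) hx2).1 hx
  · intro h
    have hae : (fun x => (|f x| ^ p / p + |X₁ x| ^ q / q - f x * X₁ x)
        + (|f x| - f x * X₂ x)) =ᵐ[ν] 0 := by
      filter_upwards [h, hX₂1] with x hx hx2
      exact (pointwise_key hpq (f x) (X₁ x) (X₂ x) hx2).2 hx
    have hz := integral_eq_zero_of_ae hae
    rw [hint] at hz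
    linarith
end
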